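/- arXiv:2102.05573 — 2 statements merged into one kernel-verified Lean document; each statement's English description precedes it below -/
import Mathlib

section
/- Let H be a real Hilbert space, Σ̂, Σ bounded self-adjoint positive operators, λ > 0, and μ, μ̂, ν, ν̂ ∈ H. Then ‖(Σ̂+λI)⁻¹(μ̂−ν̂) − (Σ+λI)⁻¹(μ−ν)‖ ≤ (1/λ)(‖μ̂−μ‖ + ‖ν−ν̂‖) + (1/λ²)‖Σ̂−Σ‖·‖μ−ν‖. -/
/-!
Since `Σ + λ` is `λ`-coercive, any right inverse of it has norm at most `1/λ`. The resolvent identity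
`B̂ - B = B̂ (Σ - Σ̂) B` then splits the error into the inverse applied to the change of the
means and a term bounded by `‖B̂‖ ‖Σ̂ - Σ‖ ‖B‖ ‖μ - ν‖`.
-/

open scoped RealInnerProductSpace

theorem sub_eq_mul_sub_mul_of_mul_eq_one {R : Type*} [Ring R] {a' x' a x : R}
    (h' : a' * x' = 1) (h : x * a = 1) : a' - a = a' * (x - x') * a := by
  rw [mul_sub, sub_mul, mul_assoc, h, mul_one, h', one_mul]

namespace ContinuousLinearMap

variable {H : Type*} [NormedAddCommGroup H] [InnerProductSpace ℝ H]

theorem IsPositive.mul_norm_le_norm_add_smul_apply {S : H →L[ℝ] H} (hS : S.IsPositive)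
    (lam : ℝ) (x : H) : lam * ‖x‖ ≤ ‖(S + lam • 1) x‖ := by
  have hcoercive : lam * ‖x‖ ^ 2 ≤ ⟪(S + lam • 1) x, x⟫ := by
    simp only [add_apply, smul_apply, one_apply_eq_self, inner_add_left,
      real_inner_smul_left, real_inner_self_eq_norm_sq]
    linarith [hS.inner_nonneg_left x]
  rcases (norm_nonneg x).eq_or_lt with hx | hx
  · simp [← hx]
  · refine le_of_mul_le_mul_right ?_ hx
    rw [mul_assoc, ← pow_two]
    exact hcoercive.trans (real_inner_le_norm _ _)

theorem IsPositive.opNorm_le_inv_of_add_smul_comp_eq_one {S B : H →L[ℝ] H}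
    (hS : S.IsPositive) {lam : ℝ} (hlam : 0 < lam) (hB : (S + lam • 1) ∘L B = 1) :
    ‖B‖ ≤ lam⁻¹ := by
  refine opNorm_le_bound B (inv_nonneg.2 hlam.le) fun y => ?_
  have hy : (S + lam • 1) (B y) = y := by rw [← comp_apply, hB, one_apply_eq_self]
  rw [inv_mul_eq_div, le_div_iff₀' hlam]
  simpa only [hy] using hS.mul_norm_le_norm_add_smul_apply lam (B y)

end ContinuousLinearMap

theorem kfda_witness_error_decomposition_general
    {H : Type*} [NormedAddCommGroup H] [InnerProductSpace ℝ H]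
    (Sh S : H →L[ℝ] H) (hSh : Sh.IsPositive) (hS : S.IsPositive)
    (lam : ℝ) (hlam : 0 < lam) (Bh B : H →L[ℝ] H)
    (hBh₁ : Bh ∘L (Sh + lam • 1) = 1) (hBh₂ : (Sh + lam • 1) ∘L Bh = 1)
    (hB₂ : (S + lam • 1) ∘L B = 1)
    (μ μh ν νh : H) :
    ‖Bh (μh - νh) - B (μ - ν)‖ ≤
      (1 / lam) * (‖μh - μ‖ + ‖ν - νh‖) + (1 / lam ^ 2) * ‖Sh - S‖ * ‖μ - ν‖ := by
  have hBh := hSh.opNorm_le_inv_of_add_smul_comp_eq_one hlam hBh₂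
  have hB := hS.opNorm_le_inv_of_add_smul_comp_eq_one hlam hB₂
  have hresolvent : Bh - B = Bh * (S - Sh) * B := by
    rw [sub_eq_mul_sub_mul_of_mul_eq_one hBh₁ hB₂, add_sub_add_right_eq_sub]
  have hsplit : Bh (μh - νh) - B (μ - ν) = Bh ((μh - μ) + (ν - νh)) + (Bh - B) (μ - ν) := by
    simp only [sub_apply, map_add, map_sub]
    abel
  have hcov : ‖Bh - B‖ ≤ lam⁻¹ * ‖Sh - S‖ * lam⁻¹ :=
    calc ‖Bh - B‖ ≤ ‖Bh‖ * ‖S - Sh‖ * ‖B‖ := hresolvent ▸ norm_mul₃_le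
      _ ≤ lam⁻¹ * ‖Sh - S‖ * lam⁻¹ := by rw [norm_sub_rev]; gcongr
  calc ‖Bh (μh - νh) - B (μ - ν)‖
      = ‖Bh ((μh - μ) + (ν - νh)) + (Bh - B) (μ - ν)‖ := by rw [hsplit]
    _ ≤ ‖Bh‖ * (‖μh - μ‖ + ‖ν - νh‖) + ‖Bh - B‖ * ‖μ - ν‖ :=
        norm_add_le_of_le (Bh.le_opNorm_of_le (norm_add_le _ _)) ((Bh - B).le_opNorm _)
    _ ≤ lam⁻¹ * (‖μh - μ‖ + ‖ν - νh‖) + lam⁻¹ * ‖Sh - S‖ * lam⁻¹ * ‖μ - ν‖ := by gcongr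
    _ = (1 / lam) * (‖μh - μ‖ + ‖ν - νh‖) + (1 / lam ^ 2) * ‖Sh - S‖ * ‖μ - ν‖ := by ring

/-- Deterministic error decomposition for the regularized KFDA witness:
`‖(Σ̂+λI)⁻¹(μ̂-ν̂) - (Σ+λI)⁻¹(μ-ν)‖ ≤ (1/λ)(‖μ̂-μ‖ + ‖ν-ν̂‖) + (1/λ²)‖Σ̂-Σ‖ ‖μ-ν‖`,
where `B̂, B` denote the two-sided inverses of `Σ̂+λI` and `Σ+λI`. -/
theorem kfda_witness_error_decomposition
    {H : Type*} [NormedAddCommGroup H] [InnerProductSpace ℝ H] [CompleteSpace H]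
    (Sh S : H →L[ℝ] H) (hSh : Sh.IsPositive) (hS : S.IsPositive)
    (lam : ℝ) (hlam : 0 < lam) (Bh B : H →L[ℝ] H)
    (hBh₁ : Bh ∘L (Sh + lam • 1) = 1) (hBh₂ : (Sh + lam • 1) ∘L Bh = 1)
    (hB₁ : B ∘L (S + lam • 1) = 1) (hB₂ : (S + lam • 1) ∘L B = 1)
    (μ μh ν νh : H) :
    ‖Bh (μh - νh) - B (μ - ν)‖ ≤
      (1 / lam) * (‖μh - μ‖ + ‖ν - νh‖) + (1 / lam ^ 2) * ‖Sh - S‖ * ‖μ - ν‖ :=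
  kfda_witness_error_decomposition_general Sh S hSh hS lam hlam Bh B hBh₁ hBh₂ hB₂ μ μh ν νh
end

section
/- Let K be a symmetric positive semidefinite (n+m)×(n+m) real matrix, N a symmetric positive semidefinite (n+m)×(n+m) matrix, λ > 0, and δ ∈ ℝ^{n+m}. If K is invertible, then the vector α̂ = (K N K/(n+m) + λK)⁻¹ K δ satisfies the generalized normal equation (K N K/(n+m) + λK) α̂ = Kδ, and h(·) = Σᵢ α̂ᵢ k(zᵢ,·) maximizes α ↦ (δᵀKα)/(αᵀ(KNK/(n+m) + λK)α)^{1/2} over α ∈ ℝ^{n+m} (up to positive scaling), provided δᵀKδ > 0. -/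
/-!
`M = KNK/(n+m) + λK` is positive definite (positive semidefinite plus `λ` times the positive
definite `K`), so `α̂ = M⁻¹Kδ` solves `Mα̂ = Kδ`. By symmetry of `K` the numerator becomes
`δᵀKα = α̂ᵀMα`, and Cauchy–Schwarz for the semi-inner product `(x, y) ↦ xᵀMy` bounds it by
`√(α̂ᵀMα̂) · √(αᵀMα)`; at `α = α̂` the quotient equals `√(α̂ᵀMα̂)`.
-/

open Matrix

namespace Matrix

lemma IsHermitian.dotProduct_mulVec_comm {R ι : Type*} [CommSemiring R] [StarRing R]
    [TrivialStar R] [Fintype ι] {M : Matrix ι ι R} (hM : M.IsHermitian) (x y : ι → R) :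
    x ⬝ᵥ M *ᵥ y = y ⬝ᵥ M *ᵥ x := by
  rw [dotProduct_mulVec, ← mulVec_transpose, ← conjTranspose_eq_transpose_of_trivial, hM.eq,
    dotProduct_comm]

lemma PosSemidef.dotProduct_mulVec_sq_le {R ι : Type*} [Field R] [LinearOrder R]
    [IsStrictOrderedRing R] [StarRing R] [TrivialStar R] [Fintype ι] {M : Matrix ι ι R} (hM : M.PosSemidef) (x y : ι → R) :
    (x ⬝ᵥ M *ᵥ y) ^ 2 ≤ (x ⬝ᵥ M *ᵥ x) * (y ⬝ᵥ M *ᵥ y) := by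
  have hdiscrim := discrim_le_zero (a := y ⬝ᵥ M *ᵥ y) (b := 2 * (x ⬝ᵥ M *ᵥ y))
    (c := x ⬝ᵥ M *ᵥ x) fun t => by
      have := hM.dotProduct_mulVec_nonneg (x + t • y)
      simp only [star_trivial, mulVec_add, mulVec_smul, dotProduct_add, add_dotProduct,
        dotProduct_smul, smul_dotProduct, smul_eq_mul,
        hM.isHermitian.dotProduct_mulVec_comm y x] at this
      linarith
  rw [discrim] at hdiscrim
  linarith

variable {ι : Type*} [Fintype ι] {M : Matrix ι ι ℝ}

lemma PosSemidef.dotProduct_div_sqrt_le_of_mulVec_eq (hM : M.PosSemidef) {b x : ι → ℝ}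
    (hx : M *ᵥ x = b) (α : ι → ℝ) :
    b ⬝ᵥ α / √(α ⬝ᵥ M *ᵥ α) ≤ b ⬝ᵥ x / √(x ⬝ᵥ M *ᵥ x) := by
  have hnum (y : ι → ℝ) : b ⬝ᵥ y = x ⬝ᵥ M *ᵥ y := by
    rw [← hx, hM.isHermitian.dotProduct_mulVec_comm x, dotProduct_comm]
  rw [hnum, hnum, Real.div_sqrt]
  have hxx : 0 ≤ x ⬝ᵥ M *ᵥ x := by simpa using hM.dotProduct_mulVec_nonneg x
  refine div_le_of_le_mul₀ (Real.sqrt_nonneg _) (Real.sqrt_nonneg _) ?_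
  calc x ⬝ᵥ M *ᵥ α ≤ |x ⬝ᵥ M *ᵥ α| := le_abs_self _
    _ ≤ √((x ⬝ᵥ M *ᵥ x) * (α ⬝ᵥ M *ᵥ α)) := Real.abs_le_sqrt (hM.dotProduct_mulVec_sq_le x α)
    _ = √(x ⬝ᵥ M *ᵥ x) * √(α ⬝ᵥ M *ᵥ α) := Real.sqrt_mul hxx _

end Matrix

theorem kfda_dual_solution_general (n m : ℕ)
    (K Nc : Matrix (Fin (n + m)) (Fin (n + m)) ℝ)
    (hK : K.PosSemidef) (hKinv : IsUnit K) (hNc : Nc.PosSemidef)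
    (lam : ℝ) (hlam : 0 < lam) (δ : Fin (n + m) → ℝ) :
    let M : Matrix (Fin (n + m)) (Fin (n + m)) ℝ :=
      ((n + m : ℝ))⁻¹ • (K * Nc * K) + lam • K
    let αhat : Fin (n + m) → ℝ := M⁻¹.mulVec (K.mulVec δ)
    M.mulVec αhat = K.mulVec δ ∧
    ∀ α : Fin (n + m) → ℝ,
      (δ ⬝ᵥ K.mulVec α) / Real.sqrt (α ⬝ᵥ M.mulVec α) ≤
        (δ ⬝ᵥ K.mulVec αhat) / Real.sqrt (αhat ⬝ᵥ M.mulVec αhat) := by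
  intro M αhat
  have hKNK : (K * Nc * K).PosSemidef := by
    simpa only [hK.isHermitian.eq] using hNc.mul_mul_conjTranspose_same K
  have hM : M.PosDef := PosDef.posSemidef_add (hKNK.smul (a := ((n + m : ℝ))⁻¹) (by positivity))
    ((hK.posDef_iff_isUnit.mpr hKinv).smul hlam)
  have hnormal : M *ᵥ αhat = K *ᵥ δ := by
    rw [mulVec_mulVec, mul_nonsing_inv _ ((isUnit_iff_isUnit_det M).mp hM.isUnit), one_mulVec]
  refine ⟨hnormal, fun α => ?_⟩
  simp only [hK.isHermitian.dotProduct_mulVec_comm δ, ← dotProduct_comm (K *ᵥ δ)]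
  exact hM.posSemidef.dotProduct_div_sqrt_le_of_mulVec_eq hnormal α

/-- Closed-form coefficients of the empirical KFDA witness: with `K` a symmetric
PSD invertible Gram matrix, `Nc` PSD, `λ > 0`, and `δᵀKδ > 0`, the vector
`α̂ = (KNK/(n+m) + λK)⁻¹ K δ` satisfies the normal equation
`(KNK/(n+m) + λK) α̂ = Kδ` and maximizes
`α ↦ δᵀKα / (αᵀ(KNK/(n+m)+λK)α)^{1/2}`. -/
theorem kfda_dual_solution (n m : ℕ) (hnm : 0 < n + m)
    (K Nc : Matrix (Fin (n + m)) (Fin (n + m)) ℝ)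
    (hK : K.PosSemidef) (hKinv : IsUnit K) (hNc : Nc.PosSemidef)
    (lam : ℝ) (hlam : 0 < lam) (δ : Fin (n + m) → ℝ)
    (hδ : 0 < δ ⬝ᵥ K.mulVec δ) :
    let M : Matrix (Fin (n + m)) (Fin (n + m)) ℝ :=
      ((n + m : ℝ))⁻¹ • (K * Nc * K) + lam • K
    let αhat : Fin (n + m) → ℝ := M⁻¹.mulVec (K.mulVec δ)
    M.mulVec αhat = K.mulVec δ ∧
    ∀ α : Fin (n + m) → ℝ,
      (δ ⬝ᵥ K.mulVec α) / Real.sqrt (α ⬝ᵥ M.mulVec α) ≤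
        (δ ⬝ᵥ K.mulVec αhat) / Real.sqrt (αhat ⬝ᵥ M.mulVec αhat) :=
  kfda_dual_solution_general n m K Nc hK hKinv hNc lam hlam δ
end
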